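/- arXiv:1108.0142 — 2 statements merged into one kernel-verified Lean document; each statement's English description precedes it below -/
import Mathlib

section
/- For f, g ∈ ℓᵖ(I) with f ≺ g and g ≺ f, one has ∑_{i∈I} φ(f(i)) = ∑_{i∈I} φ(g(i)) for every convex function φ : (a,b) → [0,∞) whose domain contains the ranges of f and g. -/
/-!
If `f = D g` with `D` doubly stochastic, Jensen's inequality applied to the `i`-th row of `D`
gives `φ (f i) ≤ ∑ j, D i j * φ (g j)`; summing over `i` and using that the columns of `D` sum
to `1` gives `∑ φ ∘ f ≤ ∑ φ ∘ g`, and the reverse majorization gives the other inequality.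
Working in `ℝ≥0∞` lets the double sum be swapped with no summability hypothesis.
-/

open scoped ENNReal

/-- The standard basis element `e i` of `ℓᵖ(I)`. -/
noncomputable def stdb (p : ℝ≥0∞) {I : Type*} (i : I) : lp (fun _ : I => ℝ) p :=
  letI := Classical.decEq I
  lp.single p i 1

/-- A bounded linear operator `A : ℓᵖ(J) → ℓᵖ(I)` is positive if `A f ≥ 0` whenever `f ≥ 0`. -/
def IsPositiveOp {I J : Type*} {p : ℝ≥0∞} [Fact (1 ≤ p)]
    (A : lp (fun _ : J => ℝ) p →L[ℝ] lp (fun _ : I => ℝ) p) : Prop :=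
  ∀ f : lp (fun _ : J => ℝ) p, (∀ j, 0 ≤ f j) → ∀ i, 0 ≤ A f i

/-- Row stochastic: positive and each row sum `∑_j ⟨A e_j, e_i⟩` equals 1. -/
def IsRowStochastic {I J : Type*} {p : ℝ≥0∞} [Fact (1 ≤ p)]
    (A : lp (fun _ : J => ℝ) p →L[ℝ] lp (fun _ : I => ℝ) p) : Prop :=
  IsPositiveOp A ∧ ∀ i : I, HasSum (fun j : J => A (stdb p j) i) 1

/-- Column stochastic: positive and each column sum `∑_i ⟨A e_j, e_i⟩` equals 1. -/
def IsColumnStochastic {I J : Type*} {p : ℝ≥0∞} [Fact (1 ≤ p)]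
    (A : lp (fun _ : J => ℝ) p →L[ℝ] lp (fun _ : I => ℝ) p) : Prop :=
  IsPositiveOp A ∧ ∀ j : J, HasSum (fun i : I => A (stdb p j) i) 1

/-- Doubly stochastic: both row and column stochastic. -/
def IsDoublyStochastic {I J : Type*} {p : ℝ≥0∞} [Fact (1 ≤ p)]
    (A : lp (fun _ : J => ℝ) p →L[ℝ] lp (fun _ : I => ℝ) p) : Prop :=
  IsRowStochastic A ∧ IsColumnStochastic A

/-- `f ≺ g` : `f` is majorized by `g`, i.e. `f = D g` for some doubly stochastic `D`. -/
def Majorized {I : Type*} {p : ℝ≥0∞} [Fact (1 ≤ p)]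
    (f g : lp (fun _ : I => ℝ) p) : Prop :=
  ∃ D : lp (fun _ : I => ℝ) p →L[ℝ] lp (fun _ : I => ℝ) p,
    IsDoublyStochastic D ∧ f = D g

/-- `T` preserves majorization if `f ≺ g` implies `T f ≺ T g`. -/
def PreservesMajorization {I : Type*} {p : ℝ≥0∞} [Fact (1 ≤ p)]
    (T : lp (fun _ : I => ℝ) p →L[ℝ] lp (fun _ : I => ℝ) p) : Prop :=
  ∀ f g : lp (fun _ : I => ℝ) p, Majorized f g → Majorized (T f) (T g)

open Set

section StdBasis

variable {I J : Type*} {p : ℝ≥0∞}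

theorem stdb_eq_single [DecidableEq I] (j : I) : stdb p j = lp.single p j (1 : ℝ) := by
  unfold stdb
  congr
  exact Subsingleton.elim _ _

theorem stdb_nonneg (j i : I) : 0 ≤ stdb p j i := by
  classical
  rw [stdb_eq_single, lp.single_apply, Pi.single_apply]
  positivity

theorem hasSum_apply_stdb_mul [Fact (1 ≤ p)] (hp : p ≠ ∞)
    (A : lp (fun _ : J => ℝ) p →L[ℝ] lp (fun _ : I => ℝ) p) (h : lp (fun _ : J => ℝ) p) (i : I) :
    HasSum (fun j => A (stdb p j) i * h j) (A h i) := by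
  classical
  have single_eq : ∀ j, lp.single p j (h j) = h j • stdb p j := fun j => by
    rw [stdb_eq_single, ← lp.single_smul, smul_eq_mul, mul_one]
  have := (lp.hasSum_single hp h).mapL ((lp.evalCLM ℝ _ p i).comp A)
  simp only [single_eq, ContinuousLinearMap.comp_apply, map_smul, smul_eq_mul] at this
  simp_rw [mul_comm _ (h _)]
  exact this

end StdBasis

section Convex

variable {S : Set ℝ} {φ : ℝ → ℝ}

theorem ConvexOn.add_rightDeriv_mul_sub_le (hφ : ConvexOn ℝ S φ) {t x : ℝ}
    (ht : t ∈ interior S) (hx : x ∈ S) :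
    φ t + derivWithin φ (Ioi t) t * (x - t) ≤ φ x := by
  rcases lt_trichotomy x t with hxt | rfl | htx
  · have h := (hφ.slope_le_leftDeriv_of_mem_interior hx ht hxt).trans
      (hφ.leftDeriv_le_rightDeriv_of_mem_interior ht)
    rw [slope_def_field, div_le_iff₀ (sub_pos.2 hxt)] at h
    linarith
  · simp
  · have h := hφ.rightDeriv_le_slope_of_mem_interior ht hx htx
    rw [slope_def_field, le_div_iff₀ (sub_pos.2 htx)] at h
    linarith

-- Jensen's inequality for countable convex combinations: integrate the supporting line at `y`.
theorem ConvexOn.le_tsum_mul_of_hasSum (hφ : ConvexOn ℝ S φ) {ι : Type*} {w x : ι → ℝ} {y : ℝ}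
    (hy : y ∈ interior S) (hx : ∀ j, x j ∈ S) (hw₀ : ∀ j, 0 ≤ w j) (hw₁ : HasSum w 1)
    (hwx : HasSum (fun j => w j * x j) y) (hsum : Summable fun j => w j * φ (x j)) :
    φ y ≤ ∑' j, w j * φ (x j) := by
  set c := derivWithin φ (Ioi y) y
  have hline : HasSum (fun j => φ y * w j + c * (w j * x j - y * w j)) (φ y) := by
    simpa using (hw₁.mul_left (φ y)).add (((hwx.sub (hw₁.mul_left y))).mul_left c)
  rw [← hline.tsum_eq]
  refine hline.summable.tsum_le_tsum (fun j => ?_) hsum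
  have := mul_le_mul_of_nonneg_left (hφ.add_rightDeriv_mul_sub_le hy (hx j)) (hw₀ j)
  linarith

theorem ConvexOn.ofReal_le_tsum_ofReal_mul (hφ : ConvexOn ℝ S φ) {ι : Type*} {w x : ι → ℝ}
    {y : ℝ} (hy : y ∈ interior S) (hx : ∀ j, x j ∈ S) (hφx : ∀ j, 0 ≤ φ (x j))
    (hw₀ : ∀ j, 0 ≤ w j) (hw₁ : HasSum w 1) (hwx : HasSum (fun j => w j * x j) y) :
    ENNReal.ofReal (φ y) ≤ ∑' j, ENNReal.ofReal (w j) * ENNReal.ofReal (φ (x j)) := by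
  simp_rw [← ENNReal.ofReal_mul (hw₀ _)]
  by_cases htop : ∑' j, ENNReal.ofReal (w j * φ (x j)) = ⊤
  · simp [htop]
  have hnonneg : ∀ j, 0 ≤ w j * φ (x j) := fun j => mul_nonneg (hw₀ j) (hφx j)
  have hsum : Summable fun j => w j * φ (x j) :=
    (ENNReal.summable_toReal htop).congr fun j => ENNReal.toReal_ofReal (hnonneg j)
  rw [← ENNReal.ofReal_tsum_of_nonneg hnonneg hsum]
  exact ENNReal.ofReal_le_ofReal (hφ.le_tsum_mul_of_hasSum hy hx hw₀ hw₁ hwx hsum)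

end Convex

theorem tsum_ofReal_le_of_majorized {I : Type*} {p : ℝ≥0∞} [Fact (1 ≤ p)] (hp : p ≠ ∞)
    {f g : lp (fun _ : I => ℝ) p} (hfg : Majorized f g) {S : Set ℝ} {φ : ℝ → ℝ}
    (hφ : ConvexOn ℝ S φ) (hf : ∀ i, f i ∈ interior S) (hg : ∀ j, g j ∈ S)
    (hφg : ∀ j, 0 ≤ φ (g j)) :
    ∑' i, ENNReal.ofReal (φ (f i)) ≤ ∑' j, ENNReal.ofReal (φ (g j)) := by
  obtain ⟨D, ⟨⟨hpos, hrow⟩, -, hcol⟩, rfl⟩ := hfg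
  have hD₀ : ∀ i j, 0 ≤ D (stdb p j) i := fun i j => hpos _ (stdb_nonneg j) i
  have hcol' : ∀ j, ∑' i, ENNReal.ofReal (D (stdb p j) i) = 1 := fun j => by
    rw [← ENNReal.ofReal_tsum_of_nonneg (hD₀ · j) (hcol j).summable, (hcol j).tsum_eq,
      ENNReal.ofReal_one]
  calc ∑' i, ENNReal.ofReal (φ (D g i))
      ≤ ∑' i, ∑' j, ENNReal.ofReal (D (stdb p j) i) * ENNReal.ofReal (φ (g j)) :=
        ENNReal.tsum_le_tsum fun i => hφ.ofReal_le_tsum_ofReal_mul (hf i) hg hφg (hD₀ i) (hrow i)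
          (hasSum_apply_stdb_mul hp D g i)
    _ = ∑' j, ENNReal.ofReal (φ (g j)) := by
        rw [ENNReal.tsum_comm]
        simp_rw [ENNReal.tsum_mul_right, hcol', one_mul]

theorem stmt10_general {I : Type*} (p : ℝ≥0∞) [Fact (1 ≤ p)] (hp : p ≠ ∞)
    (f g : lp (fun _ : I => ℝ) p) (hfg : Majorized f g) (hgf : Majorized g f)
    (a b : EReal) (φ : ℝ → ℝ)
    (hconv : ConvexOn ℝ {x : ℝ | a < (x : EReal) ∧ (x : EReal) < b} φ)
    (hφ : ∀ x : ℝ, a < (x : EReal) → (x : EReal) < b → 0 ≤ φ x)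
    (hf : ∀ i, a < (f i : EReal) ∧ (f i : EReal) < b)
    (hg : ∀ i, a < (g i : EReal) ∧ (g i : EReal) < b) :
    ∑' i : I, ENNReal.ofReal (φ (f i)) = ∑' i : I, ENNReal.ofReal (φ (g i)) := by
  have hopen : IsOpen {x : ℝ | a < (x : EReal) ∧ (x : EReal) < b} :=
    isOpen_Ioo.preimage continuous_coe_real_ereal
  have hinterior := hopen.subset_interior_iff.2 subset_rfl
  exact le_antisymm
    (tsum_ofReal_le_of_majorized hp hfg hconv (hinterior <| hf ·) hg
      fun j => hφ _ (hg j).1 (hg j).2)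
    (tsum_ofReal_le_of_majorized hp hgf hconv (hinterior <| hg ·) hf
      fun i => hφ _ (hf i).1 (hf i).2)

/-- If `f ≺ g` and `g ≺ f` then `∑_i φ (f i) = ∑_i φ (g i)` for every convex
`φ : (a,b) → [0,∞)` whose domain contains the ranges of `f` and `g`. -/
theorem stmt10 {I : Type*} [Nonempty I] (p : ℝ≥0∞) [Fact (1 ≤ p)] (hp : p ≠ ∞)
    (f g : lp (fun _ : I => ℝ) p) (hfg : Majorized f g) (hgf : Majorized g f)
    (a b : EReal) (hab : a < b) (φ : ℝ → ℝ)
    (hconv : ConvexOn ℝ {x : ℝ | a < (x : EReal) ∧ (x : EReal) < b} φ)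
    (hφ : ∀ x : ℝ, a < (x : EReal) → (x : EReal) < b → 0 ≤ φ x)
    (hf : ∀ i, a < (f i : EReal) ∧ (f i : EReal) < b)
    (hg : ∀ i, a < (g i : EReal) ∧ (g i : EReal) < b) :
    ∑' i : I, ENNReal.ofReal (φ (f i)) = ∑' i : I, ENNReal.ofReal (φ (g i)) :=
  stmt10_general p hp f g hfg hgf a b φ hconv hφ hf hg
end

section
/- Fix k ∈ ℕ and define T : ℓᵖ(ℕ) → ℓᵖ(ℕ) by (Tf)(n) = f(⌊n/k⌋) for n ≥ k and (Tf)(n) = 0 for n < k. Then T is a bounded linear operator with ‖T‖ = k^{1/p}, and T preserves majorization. -/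
/-!
Every `n ≥ k` is uniquely `k * m + r` with `m ≥ 1` and `r < k`, so the dilation `T` is the sum
over `r < k` of the extensions by zero along `m ↦ k * m + r`. These are isometries with disjoint
ranges, whence `‖T f‖ₚᵖ = k ‖f‖ₚᵖ`. For majorization, `T (D g) = D' (T g)`, where `D'` is block
diagonal for the partition of `ℕ₊` into `{n | n < k}` and those `k` ranges: it is the identity on
the first block and a copy of `D` on each of the others. A block-diagonal operator with doubly
stochastic blocks is doubly stochastic.
-/

open scoped ENNReal

open scoped lp

open Function Set

section General

variable {p : ℝ≥0∞} {I J : Type*}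

lemma stdb_apply [DecidableEq I] (j i : I) : stdb p j i = if i = j then 1 else 0 := by
  classical
  simp only [stdb, lp.single_apply, Pi.single_apply]
  congr

lemma norm_stdb (hp : 0 < p.toReal) (j : I) : ‖stdb p j‖ = 1 := by
  classical
  exact (lp.norm_single (ENNReal.toReal_pos_iff.1 hp).1 j 1).trans norm_one

namespace lp

variable {φ : J → I}

lemma sum_rpow_comp_le (hp : 0 < p.toReal) (hφ : Injective φ) (f : ℓ^p(I, ℝ)) (s : Finset J) :
    ∑ j ∈ s, ‖f (φ j)‖ ^ p.toReal ≤ ‖f‖ ^ p.toReal := by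
  simpa [Finset.sum_map] using lp.sum_rpow_le_norm_rpow hp f (s.map ⟨φ, hφ⟩)

lemma norm_rpow_extend_zero (hp : 0 < p.toReal) (g : J → ℝ) (i : I) :
    ‖extend φ g 0 i‖ ^ p.toReal = extend φ (fun j => ‖g j‖ ^ p.toReal) 0 i := by
  rw [apply_extend (fun x : ℝ => ‖x‖ ^ p.toReal)]
  congr
  ext
  simp [Real.zero_rpow hp.ne']

lemma hasSum_norm_rpow_extend_zero (hp : 0 < p.toReal) (hφ : Injective φ) (g : ℓ^p(J, ℝ)) :
    HasSum (fun i => ‖extend φ g 0 i‖ ^ p.toReal) (‖g‖ ^ p.toReal) := by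
  simpa only [norm_rpow_extend_zero hp] using (hasSum_extend_zero hφ).2 (lp.hasSum_norm hp g)

variable [Fact (1 ≤ p)]

noncomputable def precomp (hp : 0 < p.toReal) (hφ : Injective φ) : ℓ^p(I, ℝ) →L[ℝ] ℓ^p(J, ℝ) :=
  LinearMap.mkContinuous
    { toFun := fun f => ⟨f ∘ φ, memℓp_gen' (sum_rpow_comp_le hp hφ f)⟩
      map_add' := fun _ _ => rfl
      map_smul' := fun _ _ => rfl }
    1 fun f => by
      rw [one_mul]
      exact lp.norm_le_of_forall_sum_le hp (norm_nonneg f) (sum_rpow_comp_le hp hφ f)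

noncomputable def extendZero (hp : 0 < p.toReal) (hφ : Injective φ) : ℓ^p(J, ℝ) →L[ℝ] ℓ^p(I, ℝ) :=
  LinearMap.mkContinuous
    { toFun := fun g => ⟨extend φ g 0,
        memℓp_gen (hasSum_norm_rpow_extend_zero hp hφ g).summable⟩
      map_add' := fun g h => lp.ext ((ExtendByZero.hom ℝ φ).map_add g h)
      map_smul' := fun c g => lp.ext <| by
        simpa only [smul_zero, RingHom.id_apply, lp.coeFn_smul] using extend_smul c φ (⇑g) 0 }
    1 fun g => by
      rw [one_mul]
      exact lp.norm_le_of_tsum_le hp (norm_nonneg g)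
        (hasSum_norm_rpow_extend_zero hp hφ g).tsum_eq.le

variable (hp : 0 < p.toReal) (hφ : Injective φ)

@[simp] lemma precomp_apply (f : ℓ^p(I, ℝ)) (j : J) : precomp hp hφ f j = f (φ j) := rfl

lemma extendZero_apply (g : ℓ^p(J, ℝ)) (i : I) : extendZero hp hφ g i = extend φ g 0 i := rfl

@[simp] lemma extendZero_apply_self (g : ℓ^p(J, ℝ)) (j : J) : extendZero hp hφ g (φ j) = g j :=
  hφ.extend_apply _ _ _

lemma extendZero_apply_of_notMem {i : I} (hi : i ∉ range φ) (g : ℓ^p(J, ℝ)) :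
    extendZero hp hφ g i = 0 :=
  extend_apply' _ _ _ hi

lemma precomp_stdb_self (j : J) : precomp hp hφ (stdb p (φ j)) = stdb p j := by
  classical
  ext j'
  simp [stdb_apply, hφ.eq_iff]

lemma precomp_stdb_of_notMem {i : I} (hi : i ∉ range φ) : precomp hp hφ (stdb p i) = 0 := by
  classical
  ext j'
  simp only [precomp_apply, stdb_apply, lp.coeFn_zero, Pi.zero_apply]
  exact if_neg fun h => hi ⟨j', h⟩

end lp

end General

section BlockDiagonal

variable {p : ℝ≥0∞} [Fact (1 ≤ p)] {I J : Type*} {φ : J → I}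

namespace lp

noncomputable def blockAt (hp : 0 < p.toReal) (hφ : Injective φ) (A : ℓ^p(J, ℝ) →L[ℝ] ℓ^p(J, ℝ)) :
    ℓ^p(I, ℝ) →L[ℝ] ℓ^p(I, ℝ) :=
  extendZero hp hφ ∘L A ∘L precomp hp hφ

variable (hp : 0 < p.toReal) (hφ : Injective φ) {A : ℓ^p(J, ℝ) →L[ℝ] ℓ^p(J, ℝ)}

lemma blockAt_apply (f : ℓ^p(I, ℝ)) :
    blockAt hp hφ A f = extendZero hp hφ (A (precomp hp hφ f)) := rfl

lemma blockAt_stdb_of_notMem {j : I} (hj : j ∉ range φ) : blockAt hp hφ A (stdb p j) = 0 := by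
  rw [blockAt_apply, precomp_stdb_of_notMem hp hφ hj, map_zero, map_zero]

lemma isPositiveOp_blockAt (hA : IsPositiveOp A) : IsPositiveOp (blockAt hp hφ A) := by
  intro f hf i
  by_cases hi : i ∈ range φ
  · obtain ⟨i, rfl⟩ := hi
    rw [blockAt_apply, extendZero_apply_self]
    exact hA _ (fun j => hf (φ j)) i
  · exact (extendZero_apply_of_notMem hp hφ hi _).ge

lemma hasSum_blockAt_row (hA : IsRowStochastic A) (i : J) :
    HasSum (fun j => blockAt hp hφ A (stdb p j) (φ i)) 1 := by
  refine (hφ.hasSum_iff fun j hj => ?_).1 ?_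
  · rw [blockAt_stdb_of_notMem hp hφ hj, lp.coeFn_zero, Pi.zero_apply]
  · simpa [blockAt_apply, comp_def, precomp_stdb_self] using hA.2 i

lemma hasSum_blockAt_col (hA : IsColumnStochastic A) (j : J) :
    HasSum (fun i => blockAt hp hφ A (stdb p (φ j)) i) 1 := by
  simpa [blockAt_apply, precomp_stdb_self, extendZero_apply] using
    (hasSum_extend_zero hφ).2 (hA.2 j)

end lp

lemma isDoublyStochastic_id : IsDoublyStochastic (ContinuousLinearMap.id ℝ ℓ^p(I, ℝ)) := by
  classical
  have hpos : IsPositiveOp (ContinuousLinearMap.id ℝ ℓ^p(I, ℝ)) := fun f hf => hf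
  refine ⟨⟨hpos, fun i => ?_⟩, ⟨hpos, fun j => ?_⟩⟩
  · simpa [stdb_apply, eq_comm] using hasSum_ite_eq i (1 : ℝ)
  · simpa [stdb_apply] using hasSum_ite_eq j (1 : ℝ)

theorem isDoublyStochastic_sum_blockAt (hp : 0 < p.toReal) {β : Type*} [Fintype β]
    {J : β → Type*} {φ : ∀ b, J b → I} (hφ : ∀ b, Injective (φ b))
    (hcover : ∀ i, ∃! b, i ∈ range (φ b)) {A : ∀ b, ℓ^p(J b, ℝ) →L[ℝ] ℓ^p(J b, ℝ)}
    (hA : ∀ b, IsDoublyStochastic (A b)) :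
    IsDoublyStochastic (∑ b, lp.blockAt hp (hφ b) (A b)) := by
  have hpos : IsPositiveOp (∑ b, lp.blockAt hp (hφ b) (A b)) := fun f hf i => by
    simp only [sum_apply, lp.coeFn_sum, Finset.sum_apply]
    exact Finset.sum_nonneg fun b _ => lp.isPositiveOp_blockAt hp (hφ b) (hA b).1.1 f hf i
  refine ⟨⟨hpos, fun i => ?_⟩, ⟨hpos, fun j => ?_⟩⟩
  · obtain ⟨b₀, ⟨i₀, rfl⟩, hb₀⟩ := hcover i
    refine (lp.hasSum_blockAt_row hp (hφ b₀) (hA b₀).1 i₀).congr_fun fun j => ?_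
    simp only [sum_apply, lp.coeFn_sum, Finset.sum_apply]
    refine (Finset.sum_eq_single b₀ (fun b _ hb => ?_) (fun h => absurd (Finset.mem_univ b₀) h))
    exact lp.extendZero_apply_of_notMem hp (hφ b) (fun h => hb (hb₀ b h)) _
  · obtain ⟨b₀, ⟨j₀, rfl⟩, hb₀⟩ := hcover j
    refine (lp.hasSum_blockAt_col hp (hφ b₀) (hA b₀).2 j₀).congr_fun fun i => ?_
    simp only [sum_apply, lp.coeFn_sum, Finset.sum_apply]
    refine (Finset.sum_eq_single b₀ (fun b _ hb => ?_) (fun h => absurd (Finset.mem_univ b₀) h))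
    rw [lp.blockAt_stdb_of_notMem hp (hφ b) (fun h => hb (hb₀ b h)), lp.coeFn_zero, Pi.zero_apply]

end BlockDiagonal

section Dilation

local notation "ℕ₊" => {n : ℕ // 0 < n}

variable {p : ℝ≥0∞} {k : ℕ}

def stretch (r : Fin k) (m : ℕ₊) : ℕ₊ := ⟨k * m + r, Nat.add_pos_left (Nat.mul_pos r.pos m.2) _⟩

lemma stretch_injective (r : Fin k) : Injective (stretch r) := fun a b h => by
  have : k * a.1 + r = k * b.1 + r := congrArg Subtype.val h
  exact Subtype.ext (Nat.eq_of_mul_eq_mul_left r.pos (Nat.add_right_cancel this))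

lemma mem_range_stretch (r : Fin k) (i : ℕ₊) : i ∈ range (stretch r) ↔ k ≤ i.1 ∧ i.1 % k = r := by
  constructor
  · rintro ⟨m, rfl⟩
    exact ⟨(Nat.le_mul_of_pos_right k m.2).trans (Nat.le_add_right _ _),
      by simp [stretch, Nat.mod_eq_of_lt r.2]⟩
  · rintro ⟨hki, hr⟩
    refine ⟨⟨i.1 / k, Nat.div_pos hki r.pos⟩, Subtype.ext ?_⟩
    simp only [stretch, ← hr, Nat.div_add_mod]

lemma stretch_div (r : Fin k) (m : ℕ₊) : (stretch r m).1 / k = m.1 := by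
  simp [stretch, Nat.mul_add_div r.pos, Nat.div_eq_of_lt r.2]

lemma sum_extend_stretch (hk : 0 < k) (F : ℕ₊ → ℝ) (i : ℕ₊) :
    ∑ r : Fin k, extend (stretch r) F 0 i =
      if h : k ≤ i.1 then F ⟨i.1 / k, Nat.div_pos h hk⟩ else 0 := by
  split_ifs with h
  · let r₀ : Fin k := ⟨i.1 % k, Nat.mod_lt _ hk⟩
    obtain ⟨m, hm⟩ := (mem_range_stretch r₀ i).2 ⟨h, rfl⟩
    have hsingle : ∀ r ≠ r₀, extend (stretch r) F 0 i = 0 := fun r hr =>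
      extend_apply' _ _ _ fun hi => hr (Fin.ext ((mem_range_stretch r i).1 hi).2.symm)
    rw [Fintype.sum_eq_single r₀ hsingle]
    conv_lhs => rw [← hm, (stretch_injective r₀).extend_apply]
    congr
    exact Subtype.ext (show m.1 = i.1 / k by rw [← hm, stretch_div])
  · exact Finset.sum_eq_zero fun r _ =>
      extend_apply' _ _ _ fun hi => h ((mem_range_stretch r i).1 hi).1

variable [Fact (1 ≤ p)] (hp : 0 < p.toReal)

variable (k) in
noncomputable def dilation : ℓ^p(ℕ₊, ℝ) →L[ℝ] ℓ^p(ℕ₊, ℝ) :=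
  ∑ r : Fin k, lp.extendZero hp (stretch_injective r)

lemma dilation_apply (hk : 0 < k) (f : ℓ^p(ℕ₊, ℝ)) (i : ℕ₊) :
    dilation k hp f i = if h : k ≤ i.1 then f ⟨i.1 / k, Nat.div_pos h hk⟩ else 0 := by
  simp only [dilation, sum_apply, lp.coeFn_sum, Finset.sum_apply, lp.extendZero_apply]
  exact sum_extend_stretch hk f i

lemma norm_dilation_apply (hk : 0 < k) (f : ℓ^p(ℕ₊, ℝ)) :
    ‖dilation k hp f‖ = (k : ℝ) ^ (1 / p.toReal) * ‖f‖ := by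
  have hterm (i : ℕ₊) : ‖dilation k hp f i‖ ^ p.toReal =
      ∑ r : Fin k, extend (stretch r) (fun m => ‖f m‖ ^ p.toReal) 0 i := by
    rw [dilation_apply hp hk, sum_extend_stretch hk]
    split_ifs
    · rfl
    · simp [Real.zero_rpow hp.ne']
  have hsum : HasSum (fun i => ‖dilation k hp f i‖ ^ p.toReal) (k * ‖f‖ ^ p.toReal) := by
    have := hasSum_sum fun (r : Fin k) (_ : r ∈ Finset.univ) =>
      (hasSum_extend_zero (stretch_injective r)).2 (lp.hasSum_norm hp f)
    rw [Finset.sum_const, Finset.card_univ, Fintype.card_fin, nsmul_eq_mul] at this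
    exact this.congr_fun hterm
  rw [lp.norm_eq_tsum_rpow hp, hsum.tsum_eq, Real.mul_rpow (Nat.cast_nonneg k) (by positivity),
    one_div, Real.rpow_rpow_inv (norm_nonneg f) hp.ne']

lemma norm_dilation (hk : 0 < k) : ‖dilation k hp‖ = (k : ℝ) ^ (1 / p.toReal) := by
  have hk' : (0 : ℝ) ≤ (k : ℝ) ^ (1 / p.toReal) := by positivity
  refine le_antisymm
    (ContinuousLinearMap.opNorm_le_bound _ hk' fun f => (norm_dilation_apply hp hk f).le) ?_
  have := (dilation k hp).le_opNorm (stdb p (⟨1, one_pos⟩ : ℕ₊))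
  rwa [norm_dilation_apply hp hk, norm_stdb hp, mul_one, mul_one] at this

variable (k) in
def dilationBlockIndex : Option (Fin k) → Type
  | none => {n : ℕ₊ // n.1 < k}
  | some _ => ℕ₊

variable (k) in
/-- The coordinates of `ℕ₊` split into the block `{n | n < k}` and one copy of `ℕ₊` per residue
`r < k`, embedded by `stretch r`. -/
def dilationBlockEmb : ∀ b : Option (Fin k), dilationBlockIndex k b → ℕ₊
  | none => Subtype.val
  | some r => stretch r

variable (k) in
lemma dilationBlockEmb_injective : ∀ b : Option (Fin k), Injective (dilationBlockEmb k b)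
  | none => Subtype.val_injective
  | some r => stretch_injective r

lemma existsUnique_mem_range_dilationBlockEmb (hk : 0 < k) (i : ℕ₊) :
    ∃! b : Option (Fin k), i ∈ range (dilationBlockEmb k b) := by
  by_cases h : i.1 < k
  · refine ⟨none, ⟨⟨i, h⟩, rfl⟩, ?_⟩
    rintro (_ | r) hr
    · rfl
    · exact absurd ((mem_range_stretch r i).1 hr).1 (not_le.2 h)
  · refine ⟨some ⟨i.1 % k, Nat.mod_lt _ hk⟩, (mem_range_stretch _ i).2 ⟨not_lt.1 h, rfl⟩, ?_⟩
    rintro (_ | r) hr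
    · obtain ⟨⟨n, hn⟩, rfl⟩ := hr
      exact absurd hn h
    · exact congrArg some (Fin.ext ((mem_range_stretch r i).1 hr).2.symm)

variable (k) in
noncomputable def dilationBlockOp (D : ℓ^p(ℕ₊, ℝ) →L[ℝ] ℓ^p(ℕ₊, ℝ)) :
    ∀ b : Option (Fin k), ℓ^p(dilationBlockIndex k b, ℝ) →L[ℝ] ℓ^p(dilationBlockIndex k b, ℝ)
  | none => ContinuousLinearMap.id ℝ _
  | some _ => D

lemma isDoublyStochastic_dilationBlockOp {D : ℓ^p(ℕ₊, ℝ) →L[ℝ] ℓ^p(ℕ₊, ℝ)}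
    (hD : IsDoublyStochastic D) : ∀ b : Option (Fin k), IsDoublyStochastic (dilationBlockOp k D b)
  | none => isDoublyStochastic_id
  | some _ => hD

lemma precomp_none_dilation (hk : 0 < k) (g : ℓ^p(ℕ₊, ℝ)) :
    lp.precomp hp (dilationBlockEmb_injective k none) (dilation k hp g) = 0 := by
  ext ⟨i, hi⟩
  show dilation k hp g i = 0
  rw [dilation_apply hp hk, dif_neg (not_le.2 hi)]

lemma precomp_stretch_dilation (r : Fin k) (g : ℓ^p(ℕ₊, ℝ)) :
    lp.precomp hp (stretch_injective r) (dilation k hp g) = g := by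
  ext m
  rw [lp.precomp_apply, dilation_apply hp r.pos,
    dif_pos ((mem_range_stretch r _).1 ⟨m, rfl⟩).1]
  exact congrArg g (Subtype.ext (stretch_div r m))

lemma dilation_apply_map (hk : 0 < k) (D : ℓ^p(ℕ₊, ℝ) →L[ℝ] ℓ^p(ℕ₊, ℝ)) (g : ℓ^p(ℕ₊, ℝ)) :
    dilation k hp (D g) = (∑ b, lp.blockAt hp (dilationBlockEmb_injective k b)
      (dilationBlockOp k D b)) (dilation k hp g) := by
  rw [sum_apply, Fintype.sum_option, lp.blockAt_apply, precomp_none_dilation hp hk, map_zero,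
    map_zero, zero_add]
  conv_lhs => rw [dilation, sum_apply]
  refine Finset.sum_congr rfl fun r _ => ?_
  show _ = lp.extendZero hp (stretch_injective r)
    (D (lp.precomp hp (stretch_injective r) (dilation k hp g)))
  rw [precomp_stretch_dilation]

theorem preservesMajorization_dilation (hk : 0 < k) : PreservesMajorization (dilation k hp) := by
  rintro _ g ⟨D, hD, rfl⟩
  exact ⟨_, isDoublyStochastic_sum_blockAt hp (dilationBlockEmb_injective k)
    (existsUnique_mem_range_dilationBlockEmb hk) (isDoublyStochastic_dilationBlockOp hD),
    dilation_apply_map hp hk D g⟩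

end Dilation

/-- For fixed `k ≥ 1`, the operator `T` on `ℓᵖ(ℕ₊)` with `(T f) n = f ⌊n/k⌋` for `n ≥ k`
and `(T f) n = 0` for `n < k` is bounded with `‖T‖ = k^{1/p}`, and preserves majorization. -/
theorem stmt15 (p : ℝ≥0∞) [Fact (1 ≤ p)] (hp : p ≠ ∞) (k : ℕ) (hk : 0 < k) :
    ∃ T : lp (fun _ : {n : ℕ // 0 < n} => ℝ) p →L[ℝ] lp (fun _ : {n : ℕ // 0 < n} => ℝ) p,
      (∀ (f : lp (fun _ : {n : ℕ // 0 < n} => ℝ) p) (n : {n : ℕ // 0 < n}),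
        T f n = if h : k ≤ n.1 then f ⟨n.1 / k, Nat.div_pos h hk⟩ else 0) ∧
      ‖T‖ = (k : ℝ) ^ (1 / p.toReal) ∧ PreservesMajorization T := by
  have hp' : 0 < p.toReal := ENNReal.toReal_pos (zero_lt_one.trans_le Fact.out).ne' hp
  exact ⟨dilation k hp', dilation_apply hp' hk, norm_dilation hp' hk,
    preservesMajorization_dilation hp' hk⟩
end
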